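/- arXiv:1804.04115 — 3 statements merged into one kernel-verified Lean document; each statement's English description precedes it below -/
import Mathlib

section
/- Let n ≥ 1 and let Σ ⊂ ℝ^{n+1} be a nonempty compact set with 0 < Hⁿ(Σ) < ∞, where Hⁿ is n-dimensional Hausdorff measure. Then for every fixed r > 0, the supremum over x₀ ∈ ℝ^{n+1} of the Gaussian F-functional F_{x₀,r}(Σ) is achieved at some point of the convex hull of Σ: there exists x₀ ∈ convexHull(Σ) with F_{x₀,r}(Σ) = sup_{y ∈ ℝ^{n+1}} F_{y,r}(Σ). -/
/-!
Moving the center `x₀` to its nearest point in the convex hull `K` of `Σ` brings it closer to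
every point of `K ⊇ Σ` (the angle at the nearest point is obtuse), so no Gaussian
weight on `Σ`, hence not `F_{x₀,r}(Σ)` either, decreases.
Thus the supremum over all centers equals the supremum over `K`, which is attained because `K` is
compact (Carathéodory) and `F_{·,r}(Σ)` is continuous (dominated convergence, `Hⁿ(Σ) < ∞`).
-/

open MeasureTheory Metric Set RealInnerProductSpace

/-- The Gaussian F-functional `F_{x₀,r}(S) = (4πr)^{-n/2} ∫_S exp(-|x-x₀|²/(4r)) dHⁿ(x)`. -/
noncomputable def gaussianF (n : ℕ) (S : Set (EuclideanSpace ℝ (Fin (n+1))))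
    (x₀ : EuclideanSpace ℝ (Fin (n+1))) (r : ℝ) : ℝ :=
  (4 * Real.pi * r) ^ (-(n : ℝ) / 2) *
    ∫ x in S, Real.exp (-‖x - x₀‖ ^ 2 / (4 * r)) ∂(μH[(n : ℝ)])

section ConvexHull

variable {E : Type*} [AddCommGroup E] [Module ℝ E]

theorem convexHull_range_eq_image_stdSimplex {ι : Type*} [Fintype ι] (z : ι → E) :
    convexHull ℝ (range z) = (fun w : ι → ℝ => ∑ i, w i • z i) '' stdSimplex ℝ ι := by
  classical
  have hbasis : range z =
      Fintype.linearCombination ℝ z '' range fun i j : ι => if i = j then (1 : ℝ) else 0 := by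
    rw [← range_comp]
    congr 1
    funext i
    simp [Fintype.linearCombination_apply, ite_smul]
  rw [hbasis, ← LinearMap.image_convexHull, convexHull_basis_eq_stdSimplex]
  rfl

theorem exists_fin_range_eq_of_card_le {α : Type*} {t : Finset α} (ht : t.Nonempty) {m : ℕ}
    (hm : t.card ≤ m) : ∃ z : Fin m → α, range z = t := by
  obtain ⟨a, ha⟩ := ht
  refine ⟨fun i => if h : i.val < t.card then t.equivFin.symm ⟨i, h⟩ else a, ?_⟩
  apply Subset.antisymm
  · rintro _ ⟨i, rfl⟩
    dsimp only
    split_ifs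
    exacts [Subtype.mem _, ha]
  · intro y hy
    refine ⟨Fin.castLE hm (t.equivFin ⟨y, hy⟩), ?_⟩
    simp

theorem exists_fin_finrank_succ_of_mem_convexHull [FiniteDimensional ℝ E] {S : Set E} {x : E}
    (hx : x ∈ convexHull ℝ S) :
    ∃ z : Fin (Module.finrank ℝ E + 1) → E, range z ⊆ S ∧ x ∈ convexHull ℝ (range z) := by
  rw [convexHull_eq_union] at hx
  simp only [mem_iUnion] at hx
  obtain ⟨t, htS, hindep, hxt⟩ := hx
  have hcard : t.card ≤ Module.finrank ℝ E + 1 := by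
    have hspan := Submodule.finrank_le (vectorSpan ℝ (range ((↑) : t → E)))
    have hindep_card := hindep.card_le_finrank_succ
    rw [Fintype.card_coe] at hindep_card
    omega
  obtain ⟨z, hz⟩ := exists_fin_range_eq_of_card_le (convexHull_nonempty_iff.1 ⟨x, hxt⟩) hcard
  exact ⟨z, hz ▸ htS, hz ▸ hxt⟩

theorem isCompact_convexHull [FiniteDimensional ℝ E] [TopologicalSpace E] [ContinuousAdd E]
    [ContinuousSMul ℝ E] {S : Set E} (hS : IsCompact S) :
    IsCompact (convexHull ℝ S) := by
  set m := Module.finrank ℝ E + 1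
  have hhull : convexHull ℝ S = (fun p : (Fin m → ℝ) × (Fin m → E) => ∑ i, p.1 i • p.2 i) ''
      (stdSimplex ℝ (Fin m) ×ˢ univ.pi fun _ => S) := by
    apply Subset.antisymm
    · intro x hx
      obtain ⟨z, hzS, hxz⟩ := exists_fin_finrank_succ_of_mem_convexHull hx
      rw [convexHull_range_eq_image_stdSimplex] at hxz
      obtain ⟨w, hw, rfl⟩ := hxz
      exact ⟨(w, z), ⟨hw, fun i _ => hzS (mem_range_self i)⟩, rfl⟩
    · rintro _ ⟨⟨w, z⟩, ⟨hw, hz⟩, rfl⟩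
      exact (convex_convexHull ℝ S).sum_mem (fun i _ => hw.1 i) hw.2
        fun i _ => subset_convexHull ℝ S (hz i (mem_univ i))
  rw [hhull]
  exact ((isCompact_stdSimplex ℝ (Fin m)).prod (isCompact_univ_pi fun _ => hS)).image (by fun_prop)

end ConvexHull

section NearestPoint

variable {F : Type*} [NormedAddCommGroup F] [InnerProductSpace ℝ F] {K : Set F}

theorem exists_mem_forall_norm_sub_le_norm_sub (hne : K.Nonempty) (hK : IsComplete K)
    (hconv : Convex ℝ K) (y : F) : ∃ v ∈ K, ∀ x ∈ K, ‖x - v‖ ≤ ‖x - y‖ := by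
  obtain ⟨v, hvK, hv⟩ := exists_norm_eq_iInf_of_complete_convex hne hK hconv y
  have hobtuse := (norm_eq_iInf_iff_real_inner_le_zero hconv hvK).1 hv
  refine ⟨v, hvK, fun x hx => ?_⟩
  have hsq : ‖x - y‖ ^ 2 = ‖x - v‖ ^ 2 - 2 * ⟪x - v, y - v⟫ + ‖y - v‖ ^ 2 := by
    rw [← norm_sub_sq_real, sub_sub_sub_cancel_right]
  have hangle : ⟪x - v, y - v⟫ ≤ 0 := real_inner_comm (y - v) (x - v) ▸ hobtuse x hx
  exact (sq_le_sq₀ (norm_nonneg _) (norm_nonneg _)).1 (by nlinarith [sq_nonneg ‖y - v‖])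

theorem IsCompact.exists_mem_forall_le_of_le_of_closer (hK : IsCompact K) (hconv : Convex ℝ K)
    (hne : K.Nonempty) {f : F → ℝ} (hf : ContinuousOn f K)
    (hcloser : ∀ y v, (∀ x ∈ K, ‖x - v‖ ≤ ‖x - y‖) → f y ≤ f v) :
    ∃ x₀ ∈ K, ∀ y, f y ≤ f x₀ := by
  obtain ⟨x₀, hx₀, hmax⟩ := hK.exists_isMaxOn hne hf
  refine ⟨x₀, hx₀, fun y => ?_⟩
  obtain ⟨v, hvK, hv⟩ := exists_mem_forall_norm_sub_le_norm_sub hne hK.isComplete hconv y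
  exact (hcloser y v hv).trans (hmax hvK)

end NearestPoint

section GaussianIntegral

variable {E : Type*} [NormedAddCommGroup E] [MeasurableSpace E] [OpensMeasurableSpace E]
  (μ : Measure E) [IsFiniteMeasure μ] {r : ℝ}

theorem exp_neg_sq_div_le_one (hr : 0 ≤ r) (a : ℝ) : Real.exp (-a ^ 2 / (4 * r)) ≤ 1 :=
  Real.exp_le_one_iff.2
    (div_nonpos_of_nonpos_of_nonneg (neg_nonpos.2 (sq_nonneg a)) (by positivity))

theorem integrable_exp_neg_norm_sub_sq (hr : 0 ≤ r) (y : E) :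
    Integrable (fun x => Real.exp (-‖x - y‖ ^ 2 / (4 * r))) μ :=
  (integrable_const 1).mono' (Continuous.aestronglyMeasurable (by fun_prop))
    (ae_of_all _ fun x => by
      rw [Real.norm_of_nonneg (Real.exp_nonneg _)]; exact exp_neg_sq_div_le_one hr _)

theorem continuous_integral_exp_neg_norm_sub_sq (hr : 0 ≤ r) :
    Continuous fun y => ∫ x, Real.exp (-‖x - y‖ ^ 2 / (4 * r)) ∂μ := by
  refine continuous_of_dominated (bound := fun _ => 1)
    (fun y => Continuous.aestronglyMeasurable (by fun_prop)) (fun y => ae_of_all _ fun x => ?_)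
    (integrable_const 1) (ae_of_all _ fun x => by fun_prop)
  rw [Real.norm_of_nonneg (Real.exp_nonneg _)]
  exact exp_neg_sq_div_le_one hr _

variable {μ} in
theorem integral_exp_neg_norm_sub_sq_le_of_ae_closer (hr : 0 ≤ r) {y v : E}
    (hcloser : ∀ᵐ x ∂μ, ‖x - v‖ ≤ ‖x - y‖) :
    ∫ x, Real.exp (-‖x - y‖ ^ 2 / (4 * r)) ∂μ ≤ ∫ x, Real.exp (-‖x - v‖ ^ 2 / (4 * r)) ∂μ := by
  refine integral_mono_ae (integrable_exp_neg_norm_sub_sq μ hr y)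
    (integrable_exp_neg_norm_sub_sq μ hr v) (hcloser.mono fun x hx => ?_)
  exact Real.exp_le_exp.2 (div_le_div_of_nonneg_right
    (neg_le_neg (pow_le_pow_left₀ (norm_nonneg _) hx 2)) (by positivity))

end GaussianIntegral

theorem stmt_0_general (n : ℕ) (S : Set (EuclideanSpace ℝ (Fin (n+1))))
    (hne : S.Nonempty) (hcpt : IsCompact S)
    (hfin : μH[(n : ℝ)] S < ⊤)
    (r : ℝ) (hr : 0 < r) :
    ∃ x₀ ∈ convexHull ℝ S,
      (∀ y, gaussianF n S y r ≤ gaussianF n S x₀ r) ∧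
      gaussianF n S x₀ r = ⨆ y, gaussianF n S y r := by
  have : IsFiniteMeasure (μH[(n : ℝ)].restrict S) := isFiniteMeasure_restrict.2 hfin.ne
  have hcoeff : 0 ≤ (4 * Real.pi * r) ^ (-(n : ℝ) / 2) := by positivity
  have hcloser : ∀ y v, (∀ x ∈ convexHull ℝ S, ‖x - v‖ ≤ ‖x - y‖) →
      gaussianF n S y r ≤ gaussianF n S v r := fun y v hv =>
    mul_le_mul_of_nonneg_left (integral_exp_neg_norm_sub_sq_le_of_ae_closer hr.le
      (ae_restrict_of_forall_mem hcpt.measurableSet fun x hx => hv x (subset_convexHull ℝ S hx)))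
      hcoeff
  obtain ⟨x₀, hx₀, hmax⟩ := (isCompact_convexHull hcpt).exists_mem_forall_le_of_le_of_closer
    (convex_convexHull ℝ S) hne.convexHull
    ((continuous_integral_exp_neg_norm_sub_sq _ hr.le).const_mul _).continuousOn hcloser
  exact ⟨x₀, hx₀, hmax, le_antisymm (le_ciSup ⟨_, forall_mem_range.2 hmax⟩ x₀) (ciSup_le hmax)⟩

/-- For a nonempty compact set with positive finite n-dimensional Hausdorff measure and any
fixed scale r > 0, the supremum over centers of the F-functional is achieved at a point of the
convex hull. -/
theorem stmt_0 (n : ℕ) (hn : 1 ≤ n) (S : Set (EuclideanSpace ℝ (Fin (n+1))))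
    (hne : S.Nonempty) (hcpt : IsCompact S)
    (hpos : 0 < μH[(n : ℝ)] S) (hfin : μH[(n : ℝ)] S < ⊤)
    (r : ℝ) (hr : 0 < r) :
    ∃ x₀ ∈ convexHull ℝ S,
      (∀ y, gaussianF n S y r ≤ gaussianF n S x₀ r) ∧
      gaussianF n S x₀ r = ⨆ y, gaussianF n S y r :=
  stmt_0_general n S hne hcpt hfin r hr
end

section
/- Let n ≥ 1, C > 0, ε > 0 and s > 0. There exists c > 0 such that for every Borel set M ⊂ ℝ^{n+1} satisfying Hⁿ(M ∩ B(p,t)) ≤ C tⁿ for all p ∈ ℝ^{n+1}, t > 0, every x₀ ∈ ℝ^{n+1} and every 0 < r < c, one has F_{x₀,r}(M) − F_{x₀,r}(M ∩ B(x₀,s)) < ε; i.e., at sufficiently small scales the F-functional is concentrated on the ball of radius s about its center. -/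
open MeasureTheory Metric Set

lemma summable_aux (n : ℕ) (C s : ℝ) (hC : 0 < C) (hs : 0 < s) :
    Summable (fun k : ℕ => C * (((k : ℝ) + 1) * s) ^ n * Real.exp (-((k : ℝ) * s) ^ 2 / 8)) := by
  set q : ℝ := Real.exp (-(s ^ 2 / 8)) with hq
  have hq0 : 0 < q := Real.exp_pos _
  have hq1 : q < 1 := Real.exp_lt_one_iff.mpr (by nlinarith [sq_nonneg s])
  have h1 : Summable (fun k : ℕ => ((k : ℝ)) ^ n * q ^ k) :=
    summable_pow_mul_geometric_of_norm_lt_one n (by rw [Real.norm_eq_abs, abs_of_pos hq0]; exact hq1)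
  have h2 : Summable (fun k : ℕ => (((k : ℝ) + 1)) ^ n * q ^ (k + 1)) := by
    have := (summable_nat_add_iff 1).mpr h1
    refine this.congr fun k => ?_
    push_cast
    ring
  have h3 : Summable (fun k : ℕ => C * s ^ n * q⁻¹ * ((((k : ℝ) + 1)) ^ n * q ^ (k + 1))) :=
    h2.mul_left _
  refine Summable.of_nonneg_of_le (fun k => by positivity) (fun k => ?_) h3
  have hexp : Real.exp (-((k : ℝ) * s) ^ 2 / 8) ≤ q ^ k := by
    rw [← Real.exp_nat_mul]
    apply Real.exp_le_exp.mpr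
    have : ((k : ℝ) * s) ^ 2 = (k : ℝ) ^ 2 * s ^ 2 := by ring
    rw [this]
    have hk2 : (k : ℝ) ≤ (k : ℝ) ^ 2 := by
      rcases Nat.eq_zero_or_pos k with h | h
      · simp [h]
      · have : (1:ℝ) ≤ (k:ℝ) := by exact_mod_cast h
        nlinarith
    nlinarith [sq_nonneg s]
  calc C * (((k : ℝ) + 1) * s) ^ n * Real.exp (-((k : ℝ) * s) ^ 2 / 8)
      ≤ C * (((k : ℝ) + 1) * s) ^ n * q ^ k := by
        apply mul_le_mul_of_nonneg_left hexp (by positivity)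
    _ = C * s ^ n * q⁻¹ * ((((k : ℝ) + 1)) ^ n * q ^ (k + 1)) := by
        rw [mul_pow]
        field_simp
        ring

lemma annuli_bound (n : ℕ) (C s : ℝ) (hC : 0 < C) (hs : 0 < s)
    (M : Set (EuclideanSpace ℝ (Fin (n+1)))) (hM : MeasurableSet M)
    (hgrowth : ∀ (p : EuclideanSpace ℝ (Fin (n+1))) (t : ℝ), 0 < t →
        μH[(n : ℝ)] (M ∩ Metric.ball p t) ≤ ENNReal.ofReal (C * t ^ n))
    (x₀ : EuclideanSpace ℝ (Fin (n+1))) :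
    ∫⁻ x in M, ENNReal.ofReal (Real.exp (-‖x - x₀‖ ^ 2 / 8)) ∂(μH[(n : ℝ)])
      ≤ ENNReal.ofReal
        (∑' k : ℕ, C * (((k : ℝ) + 1) * s) ^ n * Real.exp (-((k : ℝ) * s) ^ 2 / 8)) := by
  classical
  set μ := (μH[(n : ℝ)] : Measure (EuclideanSpace ℝ (Fin (n+1)))) with hμ
  set A : ℕ → Set (EuclideanSpace ℝ (Fin (n+1))) :=
    fun k => M ∩ (ball x₀ (((k : ℝ) + 1) * s) \ ball x₀ ((k : ℝ) * s)) with hA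
  have hmeas : ∀ k, MeasurableSet (A k) := fun k =>
    hM.inter (measurableSet_ball.diff measurableSet_ball)
  have hMeq : M = ⋃ k, A k := by
    ext x
    simp only [mem_iUnion, hA, mem_inter_iff, mem_diff, mem_ball]
    constructor
    · intro hx
      have hP : ∃ k : ℕ, dist x x₀ < ((k : ℝ) + 1) * s := by
        obtain ⟨m, hm⟩ := exists_nat_gt (dist x x₀ / s)
        exact ⟨m, by rw [div_lt_iff₀ hs] at hm; nlinarith⟩
      refine ⟨Nat.find hP, hx, Nat.find_spec hP, ?_⟩
      rcases Nat.eq_zero_or_pos (Nat.find hP) with h | h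
      · rw [h]; push_cast; simp [not_lt.mpr dist_nonneg]
      · obtain ⟨j, hj⟩ := Nat.exists_eq_add_of_lt h
        rw [zero_add] at hj
        have := Nat.find_min hP (m := j) (by omega)
        rw [hj]
        push_cast
        intro hlt
        exact this (by push_cast; linarith)
    · rintro ⟨k, hk, _, _⟩; exact hk
  have hdisj : Pairwise (Function.onFun Disjoint A) := by
    have key : ∀ i j : ℕ, i < j → Disjoint (A i) (A j) := by
      intro i j hij
      rw [Set.disjoint_left]
      rintro x ⟨_, hx1, _⟩ ⟨_, _, hx2⟩
      apply hx2
      calc dist x x₀ < ((i : ℝ) + 1) * s := hx1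
        _ ≤ (j : ℝ) * s := by
            have : (i : ℝ) + 1 ≤ (j : ℝ) := by exact_mod_cast hij
            nlinarith
    intro i j hij
    rcases hij.lt_or_gt with h | h
    · exact key i j h
    · exact (key j i h).symm
  calc ∫⁻ x in M, ENNReal.ofReal (Real.exp (-‖x - x₀‖ ^ 2 / 8)) ∂μ
      = ∑' k, ∫⁻ x in A k, ENNReal.ofReal (Real.exp (-‖x - x₀‖ ^ 2 / 8)) ∂μ := by
        rw [hMeq, lintegral_iUnion hmeas hdisj]
    _ ≤ ∑' k : ℕ, ENNReal.ofReal (C * (((k : ℝ) + 1) * s) ^ n *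
          Real.exp (-((k : ℝ) * s) ^ 2 / 8)) := by
        apply ENNReal.tsum_le_tsum
        intro k
        have hpt : ∀ x ∈ A k, ENNReal.ofReal (Real.exp (-‖x - x₀‖ ^ 2 / 8)) ≤
            ENNReal.ofReal (Real.exp (-((k : ℝ) * s) ^ 2 / 8)) := by
          rintro x ⟨_, _, hx2⟩
          apply ENNReal.ofReal_le_ofReal
          apply Real.exp_le_exp.mpr
          have hd : (k : ℝ) * s ≤ dist x x₀ := not_lt.mp (by simpa [mem_ball] using hx2)
          have hd' : dist x x₀ = ‖x - x₀‖ := dist_eq_norm x x₀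
          have hks : (0:ℝ) ≤ (k : ℝ) * s := by positivity
          have : ((k : ℝ) * s) ^ 2 ≤ ‖x - x₀‖ ^ 2 := by
            rw [← hd'] at *
            nlinarith
          linarith
        calc ∫⁻ x in A k, ENNReal.ofReal (Real.exp (-‖x - x₀‖ ^ 2 / 8)) ∂μ
            ≤ ∫⁻ _ in A k, ENNReal.ofReal (Real.exp (-((k : ℝ) * s) ^ 2 / 8)) ∂μ :=
              setLIntegral_mono measurable_const hpt
          _ = ENNReal.ofReal (Real.exp (-((k : ℝ) * s) ^ 2 / 8)) * μ (A k) :=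
              setLIntegral_const _ _
          _ ≤ ENNReal.ofReal (Real.exp (-((k : ℝ) * s) ^ 2 / 8)) *
              ENNReal.ofReal (C * (((k : ℝ) + 1) * s) ^ n) := by
              apply mul_le_mul_right
              refine le_trans (measure_mono ?_) (hgrowth x₀ (((k : ℝ) + 1) * s) (by positivity))
              exact inter_subset_inter_right M diff_subset
          _ = ENNReal.ofReal (C * (((k : ℝ) + 1) * s) ^ n *
              Real.exp (-((k : ℝ) * s) ^ 2 / 8)) := by
              rw [← ENNReal.ofReal_mul (Real.exp_nonneg _)]
              ring_nf
    _ = ENNReal.ofReal (∑' k : ℕ, C * (((k : ℝ) + 1) * s) ^ n *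
          Real.exp (-((k : ℝ) * s) ^ 2 / 8)) :=
        (ENNReal.ofReal_tsum_of_nonneg (fun k => by positivity)
          (summable_aux n C s hC hs)).symm

lemma pointwise_exp_le (x₀ x : EuclideanSpace ℝ (Fin (n+1))) {r : ℝ} (hr : 0 < r) (hr1 : r ≤ 1)
    (n : ℕ) : Real.exp (-‖x - x₀‖ ^ 2 / (4 * r)) ≤ Real.exp (-‖x - x₀‖ ^ 2 / 8) := by
  apply Real.exp_le_exp.mpr
  have h : ‖x - x₀‖ ^ 2 / 8 ≤ ‖x - x₀‖ ^ 2 / (4 * r) := by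
    apply div_le_div_of_nonneg_left (by positivity) (by positivity) (by linarith)
  rw [neg_div, neg_div]
  linarith

lemma integrableOn_aux (n : ℕ) (C s : ℝ) (hC : 0 < C) (hs : 0 < s)
    (M : Set (EuclideanSpace ℝ (Fin (n+1)))) (hM : MeasurableSet M)
    (hgrowth : ∀ (p : EuclideanSpace ℝ (Fin (n+1))) (t : ℝ), 0 < t →
        μH[(n : ℝ)] (M ∩ Metric.ball p t) ≤ ENNReal.ofReal (C * t ^ n))
    (x₀ : EuclideanSpace ℝ (Fin (n+1))) {r : ℝ} (hr : 0 < r) (hr1 : r ≤ 1) :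
    IntegrableOn (fun x => Real.exp (-‖x - x₀‖ ^ 2 / (4 * r))) M (μH[(n : ℝ)]) := by
  have hcont : Continuous fun x : EuclideanSpace ℝ (Fin (n+1)) =>
      Real.exp (-‖x - x₀‖ ^ 2 / (4 * r)) := by fun_prop
  refine ⟨hcont.aestronglyMeasurable.restrict, ?_⟩
  rw [hasFiniteIntegral_iff_ofReal (ae_of_all _ fun x => Real.exp_nonneg _)]
  calc ∫⁻ x in M, ENNReal.ofReal (Real.exp (-‖x - x₀‖ ^ 2 / (4 * r))) ∂(μH[(n : ℝ)])
      ≤ ∫⁻ x in M, ENNReal.ofReal (Real.exp (-‖x - x₀‖ ^ 2 / 8)) ∂(μH[(n : ℝ)]) := by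
        apply lintegral_mono fun x => ENNReal.ofReal_le_ofReal (pointwise_exp_le x₀ x hr hr1 n)
    _ ≤ ENNReal.ofReal
        (∑' k : ℕ, C * (((k : ℝ) + 1) * s) ^ n * Real.exp (-((k : ℝ) * s) ^ 2 / 8)) :=
        annuli_bound n C s hC hs M hM hgrowth x₀
    _ < ⊤ := ENNReal.ofReal_lt_top

lemma tail_bound (n : ℕ) (C s : ℝ) (hC : 0 < C) (hs : 0 < s)
    (M : Set (EuclideanSpace ℝ (Fin (n+1)))) (hM : MeasurableSet M)
    (hgrowth : ∀ (p : EuclideanSpace ℝ (Fin (n+1))) (t : ℝ), 0 < t →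
        μH[(n : ℝ)] (M ∩ Metric.ball p t) ≤ ENNReal.ofReal (C * t ^ n))
    (x₀ : EuclideanSpace ℝ (Fin (n+1))) {r : ℝ} (hr : 0 < r) (hr1 : r ≤ 1) :
    ∫ x in M \ Metric.ball x₀ s, Real.exp (-‖x - x₀‖ ^ 2 / (4 * r)) ∂(μH[(n : ℝ)])
      ≤ Real.exp (-s ^ 2 / (8 * r)) *
        (∑' k : ℕ, C * (((k : ℝ) + 1) * s) ^ n * Real.exp (-((k : ℝ) * s) ^ 2 / 8)) := by
  set Av : ℝ := ∑' k : ℕ, C * (((k : ℝ) + 1) * s) ^ n * Real.exp (-((k : ℝ) * s) ^ 2 / 8)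
    with hAv
  have hAv0 : 0 ≤ Av := tsum_nonneg fun k => by positivity
  have hcont : Continuous fun x : EuclideanSpace ℝ (Fin (n+1)) =>
      Real.exp (-‖x - x₀‖ ^ 2 / (4 * r)) := by fun_prop
  rw [integral_eq_lintegral_of_nonneg_ae (ae_of_all _ fun x => Real.exp_nonneg _)
    hcont.aestronglyMeasurable.restrict]
  apply ENNReal.toReal_le_of_le_ofReal (by positivity)
  have hpt : ∀ x ∈ M \ Metric.ball x₀ s,
      ENNReal.ofReal (Real.exp (-‖x - x₀‖ ^ 2 / (4 * r))) ≤
      ENNReal.ofReal (Real.exp (-s ^ 2 / (8 * r))) *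
        ENNReal.ofReal (Real.exp (-‖x - x₀‖ ^ 2 / 8)) := by
    rintro x ⟨_, hx2⟩
    rw [← ENNReal.ofReal_mul (Real.exp_nonneg _), ← Real.exp_add]
    apply ENNReal.ofReal_le_ofReal
    apply Real.exp_le_exp.mpr
    have hsd : s ≤ ‖x - x₀‖ := by
      have := not_lt.mp (by simpa [mem_ball] using hx2)
      rwa [dist_eq_norm] at this
    have hsq : s ^ 2 ≤ ‖x - x₀‖ ^ 2 := by nlinarith
    have e1 : s ^ 2 / (8 * r) ≤ ‖x - x₀‖ ^ 2 / (8 * r) := by gcongr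
    have e2 : ‖x - x₀‖ ^ 2 / 8 ≤ ‖x - x₀‖ ^ 2 / (8 * r) :=
      div_le_div_of_nonneg_left (by positivity) (by positivity) (by linarith)
    have e3 : ‖x - x₀‖ ^ 2 / (4 * r) = ‖x - x₀‖ ^ 2 / (8 * r) + ‖x - x₀‖ ^ 2 / (8 * r) := by
      field_simp
      ring
    rw [neg_div, neg_div, neg_div]
    linarith
  calc ∫⁻ x in M \ Metric.ball x₀ s,
        ENNReal.ofReal (Real.exp (-‖x - x₀‖ ^ 2 / (4 * r))) ∂(μH[(n : ℝ)])
      ≤ ∫⁻ x in M \ Metric.ball x₀ s,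
        ENNReal.ofReal (Real.exp (-s ^ 2 / (8 * r))) *
          ENNReal.ofReal (Real.exp (-‖x - x₀‖ ^ 2 / 8)) ∂(μH[(n : ℝ)]) :=
        setLIntegral_mono' (hM.diff measurableSet_ball) hpt
    _ = ENNReal.ofReal (Real.exp (-s ^ 2 / (8 * r))) *
        ∫⁻ x in M \ Metric.ball x₀ s,
          ENNReal.ofReal (Real.exp (-‖x - x₀‖ ^ 2 / 8)) ∂(μH[(n : ℝ)]) :=
        lintegral_const_mul' _ _ ENNReal.ofReal_ne_top
    _ ≤ ENNReal.ofReal (Real.exp (-s ^ 2 / (8 * r))) * ENNReal.ofReal Av := by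
        apply mul_le_mul_right
        refine le_trans (lintegral_mono_set diff_subset) ?_
        exact annuli_bound n C s hC hs M hM hgrowth x₀
    _ = ENNReal.ofReal (Real.exp (-s ^ 2 / (8 * r)) * Av) :=
        (ENNReal.ofReal_mul (Real.exp_nonneg _)).symm

/-- Concentration at small scales: given a volume-growth constant C, ε > 0 and a radius s,
there is c > 0 such that for every center x₀ and scale 0 < r < c, the F-functional differs
from its restriction to B(x₀,s) by less than ε. -/
theorem stmt_6 (n : ℕ) (hn : 1 ≤ n) (C ε s : ℝ) (hC : 0 < C) (hε : 0 < ε) (hs : 0 < s) :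
    ∃ c > (0:ℝ), ∀ M : Set (EuclideanSpace ℝ (Fin (n+1))), MeasurableSet M →
      (∀ (p : EuclideanSpace ℝ (Fin (n+1))) (t : ℝ), 0 < t →
        μH[(n : ℝ)] (M ∩ Metric.ball p t) ≤ ENNReal.ofReal (C * t ^ n)) →
      ∀ (x₀ : EuclideanSpace ℝ (Fin (n+1))) (r : ℝ), 0 < r → r < c →
        gaussianF n M x₀ r - gaussianF n (M ∩ Metric.ball x₀ s) x₀ r < ε := by
  set Av : ℝ := ∑' k : ℕ, C * (((k : ℝ) + 1) * s) ^ n * Real.exp (-((k : ℝ) * s) ^ 2 / 8)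
    with hAv
  have hAv0 : 0 ≤ Av := tsum_nonneg fun k => by positivity
  set g : ℝ → ℝ := fun r =>
    (4 * Real.pi * r) ^ (-(n : ℝ) / 2) * (Real.exp (-s ^ 2 / (8 * r)) * Av) with hg
  have hπ : (0:ℝ) < 4 * Real.pi := by positivity
  -- the bound tends to 0
  have h1 : Filter.Tendsto (fun u : ℝ => u ^ ((n : ℝ) / 2) * Real.exp (-(s ^ 2 / 8) * u))
      Filter.atTop (nhds 0) :=
    tendsto_rpow_mul_exp_neg_mul_atTop_nhds_zero _ _ (by positivity)
  have h2 : Filter.Tendsto (fun r : ℝ => r⁻¹) (nhdsWithin 0 (Set.Ioi 0)) Filter.atTop :=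
    tendsto_inv_nhdsGT_zero
  have h3 := ((h1.comp h2).const_mul ((4 * Real.pi) ^ (-(n : ℝ) / 2) * Av))
  rw [mul_zero] at h3
  have hgt : Filter.Tendsto g (nhdsWithin 0 (Set.Ioi 0)) (nhds 0) := by
    refine h3.congr' ?_
    filter_upwards [self_mem_nhdsWithin] with r hr
    have hr0 : (0:ℝ) < r := hr
    simp only [Function.comp, hg]
    have e1 : (4 * Real.pi * r) ^ (-(n : ℝ) / 2) =
        (4 * Real.pi) ^ (-(n : ℝ) / 2) * r ^ (-(n : ℝ) / 2) :=
      Real.mul_rpow hπ.le hr0.le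
    have e2 : r ^ (-(n : ℝ) / 2) = r⁻¹ ^ ((n : ℝ) / 2) := by
      rw [Real.inv_rpow hr0.le, ← Real.rpow_neg hr0.le, neg_div]
    have e3 : Real.exp (-s ^ 2 / (8 * r)) = Real.exp (-(s ^ 2 / 8) * r⁻¹) := by
      congr 1
      field_simp
    rw [e1, e2, e3]
    ring
  have hev : ∀ᶠ r in nhdsWithin 0 (Set.Ioi 0), g r < ε ∧ r < 1 :=
    (hgt.eventually (gt_mem_nhds hε)).and
      ((gt_mem_nhds one_pos).filter_mono nhdsWithin_le_nhds)
  obtain ⟨c, hc, hsub⟩ := mem_nhdsGT_iff_exists_Ioo_subset.mp hev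
  refine ⟨c, hc, ?_⟩
  intro M hM hgrowth x₀ r hr hrc
  obtain ⟨hgε, hr1⟩ : g r < ε ∧ r < 1 := hsub ⟨hr, hrc⟩
  have hint : IntegrableOn (fun x => Real.exp (-‖x - x₀‖ ^ 2 / (4 * r))) M (μH[(n : ℝ)]) :=
    integrableOn_aux n C s hC hs M hM hgrowth x₀ hr hr1.le
  have hsplit := integral_diff (μ := μH[(n : ℝ)])
    (f := fun x => Real.exp (-‖x - x₀‖ ^ 2 / (4 * r)))
    (t := M ∩ Metric.ball x₀ s) (hM.inter measurableSet_ball) hint inter_subset_left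
  rw [Set.diff_self_inter] at hsplit
  have hcoef : (0:ℝ) < (4 * Real.pi * r) ^ (-(n : ℝ) / 2) :=
    Real.rpow_pos_of_pos (by positivity) _
  have htail := tail_bound n C s hC hs M hM hgrowth x₀ hr hr1.le
  calc gaussianF n M x₀ r - gaussianF n (M ∩ Metric.ball x₀ s) x₀ r
      = (4 * Real.pi * r) ^ (-(n : ℝ) / 2) *
        ∫ x in M \ Metric.ball x₀ s, Real.exp (-‖x - x₀‖ ^ 2 / (4 * r)) ∂(μH[(n : ℝ)]) := by
        rw [gaussianF, gaussianF, ← mul_sub, ← hsplit]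
    _ ≤ (4 * Real.pi * r) ^ (-(n : ℝ) / 2) * (Real.exp (-s ^ 2 / (8 * r)) * Av) :=
        mul_le_mul_of_nonneg_left htail hcoef.le
    _ = g r := rfl
    _ < ε := hgε
end

section
/- Let n ≥ 1, α > 0, D > 0, t ∈ [0,1), and let λ₁, …, λₙ ∈ ℝ with H := λ₁ + ⋯ + λₙ, and let g ∈ ℝ with |g| ≤ D. Assume the noncollapsing inequalities α·|λᵢ| ≤ (2 − 2t)H − g for every i. If λ₁² + ⋯ + λₙ² > 9nD²/α², then H > D and moreover (2 − 2t)H − g ≤ 3H. -/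
open Finset

/-- Algebraic core of Lemma 4.2: under the F = (2−2t)H − g noncollapsing inequalities with
|g| ≤ D, a point with |A|² > 9nD²/α² has H > D and (2−2t)H − g ≤ 3H. -/
theorem stmt_10 (n : ℕ) (hn : 1 ≤ n) (α D t : ℝ) (hα : 0 < α) (hD : 0 < D)
    (ht : t ∈ Set.Ico (0 : ℝ) 1) (lam : Fin n → ℝ) (g : ℝ) (hg : |g| ≤ D)
    (H : ℝ) (hH : H = ∑ i, lam i)
    (hnc : ∀ i, α * |lam i| ≤ (2 - 2 * t) * H - g)
    (hA : ∑ i, (lam i) ^ 2 > 9 * n * D ^ 2 / α ^ 2) :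
    D < H ∧ (2 - 2 * t) * H - g ≤ 3 * H := by
  obtain ⟨ht0, ht1⟩ := ht
  set F : ℝ := (2 - 2 * t) * H - g with hF
  have i0 : Fin n := ⟨0, hn⟩
  have hF0 : 0 ≤ F := le_trans (by positivity) (hnc i0)
  -- each λᵢ² ≤ F²/α²
  have hsum : ∑ i, (lam i) ^ 2 ≤ n * F ^ 2 / α ^ 2 := by
    have : ∀ i ∈ Finset.univ (α := Fin n), (lam i) ^ 2 ≤ F ^ 2 / α ^ 2 := by
      intro i _
      have h1 : α * |lam i| ≤ F := hnc i
      have h2 : (α * |lam i|) ^ 2 ≤ F ^ 2 := by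
        apply sq_le_sq' _ h1
        nlinarith [abs_nonneg (lam i), hα.le]
      rw [mul_pow, sq_abs] at h2
      rw [le_div_iff₀ (by positivity)]
      nlinarith
    calc ∑ i, (lam i) ^ 2 ≤ ∑ _i : Fin n, F ^ 2 / α ^ 2 := Finset.sum_le_sum this
      _ = n * F ^ 2 / α ^ 2 := by
        rw [Finset.sum_const, Finset.card_univ, Fintype.card_fin]; ring
  have hFD : 3 * D < F := by
    have h9 : 9 * n * D ^ 2 / α ^ 2 < n * F ^ 2 / α ^ 2 := lt_of_lt_of_le hA hsum
    have hn' : (0:ℝ) < n := by exact_mod_cast hn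
    have hF2 : 9 * D ^ 2 < F ^ 2 := by
      rw [div_lt_div_iff₀ (by positivity) (by positivity)] at h9
      nlinarith [mul_pos hn' (pow_pos hα 2), sq_nonneg (F - 3*D), sq_nonneg (F + 3*D)]
    nlinarith
  have hgD : -D ≤ g := neg_le_of_abs_le hg
  have hH0 : 0 < H := by
    have h2t : 0 < 2 - 2 * t := by linarith
    nlinarith
  have hF2H : F ≤ 2 * H + D := by
    have : (2 - 2 * t) * H ≤ 2 * H := by nlinarith
    simp only [hF]; linarith
  constructor
  · linarith
  · show F ≤ 3 * H
    linarith
end
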